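/- arXiv:2207.14705 — 3 statements merged into one kernel-verified Lean document; each statement's English description precedes it below -/
import Mathlib

section
/- Carnap categoricity of IPC on nuclear frames: Let (X, ≤) be a poset with nucleus j on its upsets, and let I be an assignment of operations on j-fixed upsets to the connectives ⊥, ∧, ∨, → such that for every intuitionistic consequence Γ ⊢_IPC φ and every valuation v of atoms as upsets (with atoms evaluated by applying j), the intersection of the values of Γ is contained in the value of φ. Then I(⊥) = j(∅), I(∧)(U,V) = U ∩ V, I(∨)(U,V) = j(U ∪ V), and I(→)(U,V) = {x : ↑x ∩ U ⊆ V}. -/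
/-- Formulas of intuitionistic propositional logic over atoms ℕ. -/
inductive Form : Type where
  | atom : ℕ → Form
  | bot  : Form
  | and  : Form → Form → Form
  | or   : Form → Form → Form
  | imp  : Form → Form → Form

/-- Intuitionistic propositional consequence (natural deduction). -/
inductive IPC : Set Form → Form → Prop where
  | ax    {Γ : Set Form} {φ : Form} : φ ∈ Γ → IPC Γ φ
  | botE  {Γ : Set Form} {φ : Form} : IPC Γ Form.bot → IPC Γ φ
  | andI  {Γ : Set Form} {φ ψ : Form} : IPC Γ φ → IPC Γ ψ → IPC Γ (Form.and φ ψ)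
  | andE1 {Γ : Set Form} {φ ψ : Form} : IPC Γ (Form.and φ ψ) → IPC Γ φ
  | andE2 {Γ : Set Form} {φ ψ : Form} : IPC Γ (Form.and φ ψ) → IPC Γ ψ
  | orI1  {Γ : Set Form} {φ ψ : Form} : IPC Γ φ → IPC Γ (Form.or φ ψ)
  | orI2  {Γ : Set Form} {φ ψ : Form} : IPC Γ ψ → IPC Γ (Form.or φ ψ)
  | orE   {Γ : Set Form} {φ ψ χ : Form} : IPC Γ (Form.or φ ψ) →
      IPC (insert φ Γ) χ → IPC (insert ψ Γ) χ → IPC Γ χ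
  | impI  {Γ : Set Form} {φ ψ : Form} : IPC (insert φ Γ) ψ → IPC Γ (Form.imp φ ψ)
  | impE  {Γ : Set Form} {φ ψ : Form} : IPC Γ (Form.imp φ ψ) → IPC Γ φ → IPC Γ ψ

/-- Compositional semantic value of a formula under a nuclear interpretation:
atoms are evaluated by applying the nucleus j to their value. -/
def eval {X : Type*} (j : Set X → Set X) (Ibot : Set X)
    (Iand Ior Iimp : Set X → Set X → Set X) (v : ℕ → Set X) : Form → Set X
  | Form.atom p => j (v p)
  | Form.bot => Ibot
  | Form.and φ ψ => Iand (eval j Ibot Iand Ior Iimp v φ) (eval j Ibot Iand Ior Iimp v ψ)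
  | Form.or φ ψ => Ior (eval j Ibot Iand Ior Iimp v φ) (eval j Ibot Iand Ior Iimp v ψ)
  | Form.imp φ ψ => Iimp (eval j Ibot Iand Ior Iimp v φ) (eval j Ibot Iand Ior Iimp v ψ)

/-!
Each connective is pinned down by a few valid sequents, evaluated at valuations whose atoms
take the given fixed upsets as values. Conjunction follows from ∧-introduction and
∧-elimination; from `p ∧ q → p` we get `I(→)(U, V) = X` whenever `U ⊆ V`, which lets
hypotheses of the form `p → q` be discharged. Modus ponens gives `I(→)(U, V) ⊆ U ⇒ V`
(using that `I(→)(U, V)` is an upset), and for the converse the Heyting implication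
`W = U ⇒ V` itself is fed in as the value of an atom `r`: the sequent
`r, (r ∧ p) → q ⊢ p → q` together with `W ∩ U ⊆ V` gives `W ⊆ j W ⊆ I(→)(U, V)`.
Disjunction follows from ∨-introduction and ∨-elimination, and falsum from ex falso.
-/

section NuclearSemantics

variable {X : Type*} [PartialOrder X] {j : Set X → Set X} {Ibot : Set X}
  {Iand Ior Iimp : Set X → Set X → Set X}

variable (j Ibot Iand Ior Iimp) in
def SoundForIPC : Prop :=
  ∀ (Γ : Set Form) (φ : Form), IPC Γ φ → ∀ v : ℕ → Set X, (∀ p, IsUpperSet (v p)) →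
    ⋂₀ (eval j Ibot Iand Ior Iimp v '' Γ) ⊆ eval j Ibot Iand Ior Iimp v φ

def atomVal (A B C : Set X) : ℕ → Set X
  | 0 => A
  | 1 => B
  | _ => C

theorem isUpperSet_atomVal {A B C : Set X} (hA : IsUpperSet A) (hB : IsUpperSet B)
    (hC : IsUpperSet C) (p : ℕ) : IsUpperSet (atomVal A B C p) := by
  match p with
  | 0 => exact hA
  | 1 => exact hB
  | _ + 2 => exact hC

theorem monotone_of_map_inter (hmul : ∀ U V : Set X, IsUpperSet U → IsUpperSet V →
      j (U ∩ V) = j U ∩ j V) {A B : Set X} (hA : IsUpperSet A) (hB : IsUpperSet B)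
    (hAB : A ⊆ B) : j A ⊆ j B := by
  rw [← Set.inter_eq_self_of_subset_left hAB, hmul A B hA hB]
  exact Set.inter_subset_right

namespace SoundForIPC

variable {A B C : Set X}

theorem atomVal_subset (hS : SoundForIPC j Ibot Iand Ior Iimp) {Γ : Set Form} {φ : Form}
    (hd : IPC Γ φ) (hA : IsUpperSet A) (hB : IsUpperSet B) (hC : IsUpperSet C) :
    ⋂₀ (eval j Ibot Iand Ior Iimp (atomVal A B C) '' Γ) ⊆
      eval j Ibot Iand Ior Iimp (atomVal A B C) φ :=
  hS Γ φ hd _ (isUpperSet_atomVal hA hB hC)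

theorem ibot_subset (hS : SoundForIPC j Ibot Iand Ior Iimp) : Ibot ⊆ j ∅ := by
  have hd : IPC {.bot} (.atom 0) := .botE (.ax rfl)
  simpa [eval, atomVal] using
    hS.atomVal_subset hd isUpperSet_empty isUpperSet_empty isUpperSet_empty

theorem iand_eq (hS : SoundForIPC j Ibot Iand Ior Iimp) (hA : IsUpperSet A)
    (hB : IsUpperSet B) : Iand (j A) (j B) = j A ∩ j B := by
  have hl : IPC {.and (.atom 0) (.atom 1)} (.atom 0) := .andE1 (.ax rfl)
  have hr : IPC {.and (.atom 0) (.atom 1)} (.atom 1) := .andE2 (.ax rfl)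
  have hi : IPC {.atom 0, .atom 1} (.and (.atom 0) (.atom 1)) :=
    .andI (.ax (by simp)) (.ax (by simp))
  refine subset_antisymm (Set.subset_inter ?_ ?_) ?_
  · simpa [eval, atomVal] using hS.atomVal_subset hl hA hB hB
  · simpa [eval, atomVal] using hS.atomVal_subset hr hA hB hB
  · simpa [eval, atomVal, Set.image_insert_eq] using hS.atomVal_subset hi hA hB hB

theorem iimp_eq_univ (hS : SoundForIPC j Ibot Iand Ior Iimp) (hA : IsUpperSet A)
    (hB : IsUpperSet B) (hAB : j A ⊆ j B) : Iimp (j A) (j B) = Set.univ := by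
  have hd : IPC ∅ (.imp (.and (.atom 0) (.atom 1)) (.atom 0)) :=
    .impI (.andE1 (ψ := .atom 1) (.ax (Set.mem_insert _ _)))
  have h := hS.atomVal_subset hd hB hA hA
  simp only [Set.image_empty, Set.sInter_empty, eval, atomVal, Set.univ_subset_iff] at h
  rwa [hS.iand_eq hB hA, Set.inter_eq_self_of_subset_right hAB] at h

theorem inter_iimp_subset (hS : SoundForIPC j Ibot Iand Ior Iimp) (hA : IsUpperSet A)
    (hB : IsUpperSet B) : j A ∩ Iimp (j A) (j B) ⊆ j B := by
  have hd : IPC {.atom 0, .imp (.atom 0) (.atom 1)} (.atom 1) :=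
    .impE (φ := .atom 0) (.ax (by simp)) (.ax (by simp))
  simpa [eval, atomVal, Set.image_insert_eq] using hS.atomVal_subset hd hA hB hB

theorem inter_iimp_iand_subset (hS : SoundForIPC j Ibot Iand Ior Iimp) (hA : IsUpperSet A)
    (hB : IsUpperSet B) (hC : IsUpperSet C) :
    j C ∩ Iimp (Iand (j C) (j A)) (j B) ⊆ Iimp (j A) (j B) := by
  have hd : IPC {.atom 2, .imp (.and (.atom 2) (.atom 0)) (.atom 1)}
      (.imp (.atom 0) (.atom 1)) :=
    .impI (.impE (φ := .and (.atom 2) (.atom 0)) (.ax (by simp))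
      (.andI (.ax (by simp)) (.ax (by simp))))
  simpa [eval, atomVal, Set.image_insert_eq] using hS.atomVal_subset hd hA hB hC

theorem subset_ior_left (hS : SoundForIPC j Ibot Iand Ior Iimp) (hA : IsUpperSet A)
    (hB : IsUpperSet B) : j A ⊆ Ior (j A) (j B) := by
  have hd : IPC {.atom 0} (.or (.atom 0) (.atom 1)) := .orI1 (.ax rfl)
  simpa [eval, atomVal] using hS.atomVal_subset hd hA hB hB

theorem subset_ior_right (hS : SoundForIPC j Ibot Iand Ior Iimp) (hA : IsUpperSet A)
    (hB : IsUpperSet B) : j B ⊆ Ior (j A) (j B) := by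
  have hd : IPC {.atom 1} (.or (.atom 0) (.atom 1)) := .orI2 (.ax rfl)
  simpa [eval, atomVal] using hS.atomVal_subset hd hA hB hB

theorem ior_inter_iimp_subset (hS : SoundForIPC j Ibot Iand Ior Iimp) (hA : IsUpperSet A)
    (hB : IsUpperSet B) (hC : IsUpperSet C) :
    Ior (j A) (j B) ∩ (Iimp (j A) (j C) ∩ Iimp (j B) (j C)) ⊆ j C := by
  have hd : IPC {.or (.atom 0) (.atom 1), .imp (.atom 0) (.atom 2), .imp (.atom 1) (.atom 2)}
      (.atom 2) :=
    .orE (φ := .atom 0) (ψ := .atom 1) (.ax (by simp))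
      (.impE (φ := .atom 0) (.ax (by simp)) (.ax (by simp)))
      (.impE (φ := .atom 1) (.ax (by simp)) (.ax (by simp)))
  simpa [eval, atomVal, Set.image_insert_eq] using hS.atomVal_subset hd hA hB hC

theorem ibot_eq (hS : SoundForIPC j Ibot Iand Ior Iimp)
    (hmul : ∀ U V : Set X, IsUpperSet U → IsUpperSet V → j (U ∩ V) = j U ∩ j V)
    (hIbot : IsUpperSet Ibot ∧ j Ibot = Ibot) : Ibot = j ∅ :=
  subset_antisymm hS.ibot_subset <|
    hIbot.2 ▸ monotone_of_map_inter hmul isUpperSet_empty hIbot.1 (Set.empty_subset _)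

theorem iand_eq_inter (hS : SoundForIPC j Ibot Iand Ior Iimp) {U V : Set X} (hU : IsUpperSet U)
    (hUj : j U = U) (hV : IsUpperSet V) (hVj : j V = V) : Iand U V = U ∩ V := by
  simpa only [hUj, hVj] using hS.iand_eq hU hV

theorem ior_eq (hS : SoundForIPC j Ibot Iand Ior Iimp)
    (hmul : ∀ U V : Set X, IsUpperSet U → IsUpperSet V → j (U ∩ V) = j U ∩ j V)
    {U V : Set X} (hU : IsUpperSet U) (hUj : j U = U) (hV : IsUpperSet V) (hVj : j V = V)
    (hIor : IsUpperSet (Ior U V)) (hIorj : j (Ior U V) = Ior U V) : Ior U V = j (U ∪ V) := by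
  have hUV : IsUpperSet (U ∪ V) := hU.union hV
  apply subset_antisymm
  · have h := hS.ior_inter_iimp_subset hU hV hUV
    rwa [hS.iimp_eq_univ hU hUV (monotone_of_map_inter hmul hU hUV Set.subset_union_left),
      hS.iimp_eq_univ hV hUV (monotone_of_map_inter hmul hV hUV Set.subset_union_right),
      Set.inter_univ, Set.inter_univ, hUj, hVj] at h
  · have hl := hS.subset_ior_left hU hV
    have hr := hS.subset_ior_right hU hV
    rw [hUj, hVj] at hl hr
    exact hIorj ▸ monotone_of_map_inter hmul hUV hIor (Set.union_subset hl hr)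

theorem iimp_eq (hS : SoundForIPC j Ibot Iand Ior Iimp)
    (hinf : ∀ U : Set X, IsUpperSet U → U ⊆ j U)
    (hmul : ∀ U V : Set X, IsUpperSet U → IsUpperSet V → j (U ∩ V) = j U ∩ j V)
    {U V : Set X} (hU : IsUpperSet U) (hUj : j U = U) (hV : IsUpperSet V) (hVj : j V = V)
    (hIimp : IsUpperSet (Iimp U V)) :
    Iimp U V = {x : X | {y : X | x ≤ y} ∩ U ⊆ V} := by
  set W : Set X := {x : X | {y : X | x ≤ y} ∩ U ⊆ V}
  apply subset_antisymm
  · intro x hx y ⟨hxy, hyU⟩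
    have h := hS.inter_iimp_subset hU hV
    rw [hUj, hVj] at h
    exact h ⟨hyU, hIimp hxy hx⟩
  · have hW : IsUpperSet W := fun a b hab ha y hy => ha ⟨hab.trans hy.1, hy.2⟩
    have hWU : W ∩ U ⊆ V := fun x hx => hx.1 ⟨le_rfl, hx.2⟩
    have h := hS.inter_iimp_iand_subset hU hV hW
    rw [hS.iand_eq hW hU, ← hmul W U hW hU, hS.iimp_eq_univ (hW.inter hU) hV
      (monotone_of_map_inter hmul (hW.inter hU) hV hWU), Set.inter_univ, hUj, hVj] at h
    exact (hinf W hW).trans h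

end SoundForIPC

end NuclearSemantics

theorem carnap_categoricity_IPC_general {X : Type*} [PartialOrder X] (j : Set X → Set X)
    -- j is a nucleus on the upsets of (X, ≤)
    (hinf : ∀ U : Set X, IsUpperSet U → U ⊆ j U)
    (hmul : ∀ U V : Set X, IsUpperSet U → IsUpperSet V → j (U ∩ V) = j U ∩ j V)
    -- the interpretation I of the connectives: operations on j-fixed upsets
    (Ibot : Set X) (Iand Ior Iimp : Set X → Set X → Set X)
    (hIbot : IsUpperSet Ibot ∧ j Ibot = Ibot)
    (hIor : ∀ U V : Set X, IsUpperSet U → j U = U → IsUpperSet V → j V = V →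
      IsUpperSet (Ior U V) ∧ j (Ior U V) = Ior U V)
    (hIimp : ∀ U V : Set X, IsUpperSet U → j U = U → IsUpperSet V → j V = V →
      IsUpperSet (Iimp U V) ∧ j (Iimp U V) = Iimp U V)
    -- consistency of I with ⊢_IPC
    (hcons : ∀ (Γ : Set Form) (φ : Form), IPC Γ φ →
      ∀ v : ℕ → Set X, (∀ p, IsUpperSet (v p)) →
        ⋂₀ (eval j Ibot Iand Ior Iimp v '' Γ) ⊆ eval j Ibot Iand Ior Iimp v φ) :
    -- conclusion: I is the standard nuclear interpretation
    Ibot = j ∅ ∧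
    (∀ U V : Set X, IsUpperSet U → j U = U → IsUpperSet V → j V = V →
      Iand U V = U ∩ V) ∧
    (∀ U V : Set X, IsUpperSet U → j U = U → IsUpperSet V → j V = V →
      Ior U V = j (U ∪ V)) ∧
    (∀ U V : Set X, IsUpperSet U → j U = U → IsUpperSet V → j V = V →
      Iimp U V = {x : X | {y : X | x ≤ y} ∩ U ⊆ V}) := by
  have hS : SoundForIPC j Ibot Iand Ior Iimp := hcons
  refine ⟨hS.ibot_eq hmul hIbot, fun U V hU hUj hV hVj => hS.iand_eq_inter hU hUj hV hVj,
    fun U V hU hUj hV hVj => ?_, fun U V hU hUj hV hVj => ?_⟩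
  · obtain ⟨hIorU, hIorj⟩ := hIor U V hU hUj hV hVj
    exact hS.ior_eq hmul hU hUj hV hVj hIorU hIorj
  · exact hS.iimp_eq hinf hmul hU hUj hV hVj (hIimp U V hU hUj hV hVj).1

/-- Carnap categoricity of IPC on nuclear frames: any nuclear interpretation
consistent with ⊢_IPC is the standard one. -/
theorem carnap_categoricity_IPC {X : Type*} [PartialOrder X] (j : Set X → Set X)
    -- j is a nucleus on the upsets of (X, ≤)
    (hjup : ∀ U : Set X, IsUpperSet U → IsUpperSet (j U))
    (hinf : ∀ U : Set X, IsUpperSet U → U ⊆ j U)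
    (hidem : ∀ U : Set X, IsUpperSet U → j (j U) = j U)
    (hmul : ∀ U V : Set X, IsUpperSet U → IsUpperSet V → j (U ∩ V) = j U ∩ j V)
    -- the interpretation I of the connectives: operations on j-fixed upsets
    (Ibot : Set X) (Iand Ior Iimp : Set X → Set X → Set X)
    (hIbot : IsUpperSet Ibot ∧ j Ibot = Ibot)
    (hIand : ∀ U V : Set X, IsUpperSet U → j U = U → IsUpperSet V → j V = V →
      IsUpperSet (Iand U V) ∧ j (Iand U V) = Iand U V)
    (hIor : ∀ U V : Set X, IsUpperSet U → j U = U → IsUpperSet V → j V = V →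
      IsUpperSet (Ior U V) ∧ j (Ior U V) = Ior U V)
    (hIimp : ∀ U V : Set X, IsUpperSet U → j U = U → IsUpperSet V → j V = V →
      IsUpperSet (Iimp U V) ∧ j (Iimp U V) = Iimp U V)
    -- consistency of I with ⊢_IPC
    (hcons : ∀ (Γ : Set Form) (φ : Form), IPC Γ φ →
      ∀ v : ℕ → Set X, (∀ p, IsUpperSet (v p)) →
        ⋂₀ (eval j Ibot Iand Ior Iimp v '' Γ) ⊆ eval j Ibot Iand Ior Iimp v φ) :
    -- conclusion: I is the standard nuclear interpretation
    Ibot = j ∅ ∧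
    (∀ U V : Set X, IsUpperSet U → j U = U → IsUpperSet V → j V = V →
      Iand U V = U ∩ V) ∧
    (∀ U V : Set X, IsUpperSet U → j U = U → IsUpperSet V → j V = V →
      Ior U V = j (U ∪ V)) ∧
    (∀ U V : Set X, IsUpperSet U → j U = U → IsUpperSet V → j V = V →
      Iimp U V = {x : X | {y : X | x ≤ y} ∩ U ⊆ V}) :=
  carnap_categoricity_IPC_general j hinf hmul Ibot Iand Ior Iimp hIbot hIor hIimp hcons
end

section
/- Dragalin's theorem for topologies: Let X be a topological space, let F be the poset of nonempty open sets ordered by reverse inclusion, and for a downset A of nonempty opens (i.e., closed under passing to nonempty open subsets) define jA = {U nonempty open : U ⊆ ⋃A}. Then j is a dense nucleus on the upsets of F (i.e., j∅ = ∅), and the map h(U) = {V nonempty open : V ⊆ U} is an isomorphism of Heyting algebras from the open-set frame Ω(X) onto the algebra of j-fixed upsets of F. -/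
/-- `NEO U`: U is a nonempty open set. -/
def NEO {X : Type*} [TopologicalSpace X] (U : Set X) : Prop :=
  IsOpen U ∧ U.Nonempty

/-- A downset of nonempty opens (equivalently, an upset of the poset of nonempty
opens ordered by reverse inclusion): a set of nonempty opens closed under
passing to nonempty open subsets. -/
def IsDown {X : Type*} [TopologicalSpace X] (A : Set (Set X)) : Prop :=
  (∀ U ∈ A, NEO U) ∧ ∀ U V : Set X, NEO U → U ⊆ V → V ∈ A → U ∈ A

/-- Dragalin's nucleus: jA = {U nonempty open : U ⊆ ⋃ A}. -/
def jD {X : Type*} [TopologicalSpace X] (A : Set (Set X)) : Set (Set X) :=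
  {U | NEO U ∧ U ⊆ ⋃₀ A}

/-- h(U) = {V nonempty open : V ⊆ U}. -/
def hD {X : Type*} [TopologicalSpace X] (U : Set X) : Set (Set X) :=
  {V | NEO V ∧ V ⊆ U}

/-- Heyting implication in the frame of downsets of nonempty opens
(= upsets of the reverse-inclusion poset). -/
def HimpD {X : Type*} [TopologicalSpace X] (A B : Set (Set X)) : Set (Set X) :=
  {W | NEO W ∧ ∀ W' : Set X, NEO W' → W' ⊆ W → W' ∈ A → W' ∈ B}

/-!
Dragalin's nucleus factors as `jD A = hD (⋃₀ A)`, while `⋃₀ (hD U) = U` for every open `U`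
(each point of `U` lies in the nonempty open `U` itself). So `hD` and `⋃₀` are mutually inverse
between opens and `jD`-fixed downsets, and every clause reduces to a fact about unions:
`⋃₀` commutes with binary unions always and with binary intersections of downsets, since two
members meeting at a point can be replaced by their intersection.
-/

namespace Dragalin

variable {X : Type*} [TopologicalSpace X]

theorem jD_eq_hD_sUnion (A : Set (Set X)) : jD A = hD (⋃₀ A) := rfl

theorem hD_mono : Monotone (hD (X := X)) :=
  fun _ _ hUV _ hW => ⟨hW.1, hW.2.trans hUV⟩

theorem hD_empty : hD (∅ : Set X) = ∅ :=
  Set.eq_empty_of_forall_notMem fun _ hV => hV.1.2.ne_empty (Set.subset_empty_iff.1 hV.2)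

theorem hD_inter (U V : Set X) : hD (U ∩ V) = hD U ∩ hD V := by
  ext W
  change NEO W ∧ W ⊆ U ∩ V ↔ (NEO W ∧ W ⊆ U) ∧ (NEO W ∧ W ⊆ V)
  rw [Set.subset_inter_iff]
  tauto

theorem isDown_hD (U : Set X) : IsDown (hD U) :=
  ⟨fun _ hV => hV.1, fun _ _ hV hVW hW => ⟨hV, hVW.trans hW.2⟩⟩

theorem sUnion_hD_subset (U : Set X) : ⋃₀ hD U ⊆ U :=
  Set.sUnion_subset fun _ hV => hV.2

theorem sUnion_hD {U : Set X} (hU : IsOpen U) : ⋃₀ hD U = U :=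
  (sUnion_hD_subset U).antisymm fun x hx => ⟨U, ⟨⟨hU, x, hx⟩, subset_rfl⟩, hx⟩

theorem hD_subset_hD_iff {U V : Set X} (hU : IsOpen U) : hD U ⊆ hD V ↔ U ⊆ V :=
  ⟨fun h => (sUnion_hD hU).symm.subset.trans ((Set.sUnion_mono h).trans (sUnion_hD_subset V)),
    fun h => hD_mono h⟩

theorem hD_inj {U V : Set X} (hU : IsOpen U) (hV : IsOpen V) : hD U = hD V ↔ U = V :=
  ⟨fun h => ((hD_subset_hD_iff hU).1 h.le).antisymm ((hD_subset_hD_iff hV).1 h.ge),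
    congrArg hD⟩

theorem sUnion_inter_of_isDown {A B : Set (Set X)} (hA : IsDown A) (hB : IsDown B) :
    ⋃₀ (A ∩ B) = ⋃₀ A ∩ ⋃₀ B := by
  refine (Set.subset_inter (Set.sUnion_mono Set.inter_subset_left)
    (Set.sUnion_mono Set.inter_subset_right)).antisymm ?_
  rintro x ⟨⟨V, hVA, hxV⟩, W, hWB, hxW⟩
  have hVW : NEO (V ∩ W) := ⟨(hA.1 V hVA).1.inter (hB.1 W hWB).1, x, hxV, hxW⟩
  exact ⟨V ∩ W, ⟨hA.2 _ _ hVW Set.inter_subset_left hVA, hB.2 _ _ hVW Set.inter_subset_right hWB⟩,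
    hxV, hxW⟩

theorem isDown_jD (A : Set (Set X)) : IsDown (jD A) :=
  isDown_hD _

theorem subset_jD {A : Set (Set X)} (hA : ∀ U ∈ A, NEO U) : A ⊆ jD A :=
  fun U hU => ⟨hA U hU, Set.subset_sUnion_of_mem hU⟩

theorem jD_jD_subset (A : Set (Set X)) : jD (jD A) ⊆ jD A :=
  hD_mono (sUnion_hD_subset _)

theorem jD_inter {A B : Set (Set X)} (hA : IsDown A) (hB : IsDown B) :
    jD (A ∩ B) = jD A ∩ jD B := by
  rw [jD_eq_hD_sUnion, sUnion_inter_of_isDown hA hB, hD_inter]; rfl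

theorem jD_empty : jD (∅ : Set (Set X)) = ∅ := by
  rw [jD_eq_hD_sUnion, Set.sUnion_empty, hD_empty]

theorem jD_hD {U : Set X} (hU : IsOpen U) : jD (hD U) = hD U := by
  rw [jD_eq_hD_sUnion, sUnion_hD hU]

theorem exists_hD_eq_of_jD_eq {A : Set (Set X)} (hA : ∀ U ∈ A, NEO U) (hfix : jD A = A) :
    ∃ U : Set X, IsOpen U ∧ hD U = A :=
  ⟨⋃₀ A, isOpen_sUnion fun V hV => (hA V hV).1, hfix⟩

theorem hD_union {U V : Set X} (hU : IsOpen U) (hV : IsOpen V) :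
    hD (U ∪ V) = jD (hD U ∪ hD V) := by
  rw [jD_eq_hD_sUnion, Set.sUnion_union, sUnion_hD hU, sUnion_hD hV]

theorem mem_himpD_hD_iff {U V W : Set X} (hU : IsOpen U) :
    W ∈ HimpD (hD U) (hD V) ↔ NEO W ∧ W ∩ U ⊆ V := by
  refine and_congr_right fun hW => ⟨fun himp x hx => ?_, fun h W' hW' hW'W hW'U => ?_⟩
  · have hWU : NEO (W ∩ U) := ⟨hW.1.inter hU, x, hx⟩
    exact (himp _ hWU Set.inter_subset_left ⟨hWU, Set.inter_subset_right⟩).2 hx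
  · exact ⟨hW', (Set.subset_inter hW'W hW'U.2).trans h⟩

theorem hD_interior_compl_union {U V : Set X} (hU : IsOpen U) :
    hD (interior (Uᶜ ∪ V)) = HimpD (hD U) (hD V) := by
  ext W
  rw [mem_himpD_hD_iff hU]
  refine and_congr_right fun hW => ?_
  rw [hW.1.subset_interior_iff, Set.inter_subset]

end Dragalin

open Dragalin in
/-- Dragalin's theorem for topologies: jD is a dense nucleus on the upsets of the
poset of nonempty opens under reverse inclusion, and hD is an isomorphism of
Heyting algebras from the open-set frame Ω(X) onto the algebra of jD-fixed
upsets. -/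
theorem dragalin {X : Type*} [TopologicalSpace X] :
    -- jD maps downsets to downsets and is a nucleus
    (∀ A : Set (Set X), IsDown A → IsDown (jD A)) ∧
    (∀ A : Set (Set X), IsDown A → A ⊆ jD A) ∧
    (∀ A : Set (Set X), IsDown A → jD (jD A) ⊆ jD A) ∧
    (∀ A B : Set (Set X), IsDown A → IsDown B → jD (A ∩ B) = jD A ∩ jD B) ∧
    -- jD is dense
    (jD (∅ : Set (Set X)) = ∅) ∧
    -- hD maps opens to jD-fixed downsets
    (∀ U : Set X, IsOpen U → IsDown (hD U) ∧ jD (hD U) = hD U) ∧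
    -- hD is a bijection from opens onto fixed downsets
    (∀ U V : Set X, IsOpen U → IsOpen V → hD U = hD V → U = V) ∧
    (∀ A : Set (Set X), IsDown A → jD A = A → ∃ U : Set X, IsOpen U ∧ hD U = A) ∧
    -- hD is an order isomorphism
    (∀ U V : Set X, IsOpen U → IsOpen V → (U ⊆ V ↔ hD U ⊆ hD V)) ∧
    -- hD preserves the Heyting operations
    (hD (∅ : Set X) = jD (∅ : Set (Set X))) ∧
    (∀ U V : Set X, IsOpen U → IsOpen V → hD (U ∩ V) = hD U ∩ hD V) ∧
    (∀ U V : Set X, IsOpen U → IsOpen V → hD (U ∪ V) = jD (hD U ∪ hD V)) ∧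
    (∀ U V : Set X, IsOpen U → IsOpen V →
      hD (interior (Uᶜ ∪ V)) = HimpD (hD U) (hD V)) :=
  ⟨fun A _ => isDown_jD A,
    fun _ hA => subset_jD hA.1,
    fun A _ => jD_jD_subset A,
    fun _ _ hA hB => jD_inter hA hB,
    jD_empty,
    fun U hU => ⟨isDown_hD U, jD_hD hU⟩,
    fun _ _ hU hV => (hD_inj hU hV).1,
    fun _ hA hfix => exists_hD_eq_of_jD_eq hA.1 hfix,
    fun _ _ hU _ => (hD_subset_hD_iff hU).symm,
    hD_empty.trans jD_empty.symm,
    fun U V _ _ => hD_inter U V,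
    fun _ _ hU hV => hD_union hU hV,
    fun _ _ hU _ => hD_interior_compl_union hU⟩
end

section
/- In the nuclear frame of nonempty opens (ordered by reverse inclusion) with nucleus jA = {U : U ⊆ ⋃A}, a downset A of nonempty opens satisfies jA = A if and only if A = ∅ or A = {V nonempty open : V ⊆ U} for some nonempty open U. -/
/-!
The nucleus only remembers the union of a family, `jD A = hD (⋃₀ A)`, and the union of `hD U`
is `U` itself whenever `U` is open. Hence a fixed point `A` equals `hD (⋃₀ A)`, and conversely
every `hD U` with `U` open is fixed; `U = ∅` gives the empty downset.
-/

open Set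

section

variable {X : Type*} [TopologicalSpace X]

theorem jD_eq_hD_sUnion (A : Set (Set X)) : jD A = hD (⋃₀ A) := rfl

theorem sUnion_hD {U : Set X} (hU : IsOpen U) : ⋃₀ hD U = U := by
  refine subset_antisymm (sUnion_subset fun V hV => hV.2) fun x hx => ?_
  exact subset_sUnion_of_mem (show U ∈ hD U from ⟨⟨hU, x, hx⟩, subset_rfl⟩) hx

theorem jD_hD {U : Set X} (hU : IsOpen U) : jD (hD U) = hD U := by
  rw [jD_eq_hD_sUnion, sUnion_hD hU]

theorem hD_empty : hD (∅ : Set X) = ∅ :=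
  eq_empty_of_forall_notMem fun _ hV => hV.1.2.not_subset_empty hV.2

theorem jD_empty : jD (∅ : Set (Set X)) = ∅ := by
  rw [jD_eq_hD_sUnion, sUnion_empty, hD_empty]

end

theorem fixed_iff_general {X : Type*} [TopologicalSpace X] (A : Set (Set X)) :
    jD A = A ↔ A = ∅ ∨ ∃ U : Set X, NEO U ∧ A = hD U := by
  constructor
  · intro hfix
    rcases A.eq_empty_or_nonempty with hA | ⟨W, hW⟩
    · exact Or.inl hA
    have hNEO : ∀ V ∈ A, NEO V := fun V hV => (hfix.symm ▸ hV : V ∈ jD A).1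
    refine Or.inr ⟨⋃₀ A, ⟨isOpen_sUnion fun V hV => (hNEO V hV).1,
      (hNEO W hW).2.mono (subset_sUnion_of_mem hW)⟩, ?_⟩
    rw [← jD_eq_hD_sUnion, hfix]
  · rintro (rfl | ⟨U, hU, rfl⟩)
    · exact jD_empty
    · exact jD_hD hU.1

/-- A downset A of nonempty opens is jD-fixed iff A = ∅ or A = hD U for some
nonempty open U. -/
theorem fixed_iff {X : Type*} [TopologicalSpace X] (A : Set (Set X))
    (hA : IsDown A) :
    jD A = A ↔ A = ∅ ∨ ∃ U : Set X, NEO U ∧ A = hD U :=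
  fixed_iff_general A
end
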